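/- Let R > 0 and define F : ℝ × ℝ × (0, 2√2) → ℝ³ by F(x, τ, z) = ( e^x (8−z²)/(8+z²) cos τ, e^x (8−z²)/(8+z²) sin τ, e^x 4√2 z/(8+z²) ). Then F is differentiable, its third component is strictly positive, and for every point p = (x, τ, z) in the domain and all vectors u, v ∈ ℝ³ (with coordinates ordered (x, τ, z)): (R² / F₃(p)²) · ⟨DF_p(u), DF_p(v)⟩_{ℝ³} = (R²/z²) [ 2(1+z²/8)² u₁v₁ + 2(1−z²/8)² u₂v₂ + u₃v₃ ]. That is, the pullback under F of the Euclidean Poincaré-AdS₃ metric (R²/η²)(dξ₁² + dξ₂² + dη²) is the Euclidean BTZ metric (R²/z²)[2(1−z²/8)² dτ² + 2(1+z²/8)² dx² + dz²]. -/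

import Mathlib

/-- The standard Euclidean inner product on `ℝ³ = ℝ × ℝ × ℝ`. -/
def dot3 (a b : ℝ × ℝ × ℝ) : ℝ :=
  a.1 * b.1 + a.2.1 * b.2.1 + a.2.2 * b.2.2

/-- The coordinate transformation mapping BTZ coordinates `(x, τ, z)` to Euclidean
Poincaré-AdS₃ coordinates `(ξ₁, ξ₂, η)` (equation (B.1)):
`F(x,τ,z) = (eˣ (8−z²)/(8+z²) cos τ, eˣ (8−z²)/(8+z²) sin τ, eˣ 4√2 z/(8+z²))`. -/
noncomputable def btzToPoincare : ℝ × ℝ × ℝ → ℝ × ℝ × ℝ :=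
  fun p => (Real.exp p.1 * ((8 - p.2.2 ^ 2) / (8 + p.2.2 ^ 2)) * Real.cos p.2.1,
    Real.exp p.1 * ((8 - p.2.2 ^ 2) / (8 + p.2.2 ^ 2)) * Real.sin p.2.1,
    Real.exp p.1 * (4 * Real.sqrt 2 * p.2.2 / (8 + p.2.2 ^ 2)))

/-- **The pullback of the Euclidean Poincaré-AdS₃ metric under the map (B.1) is
the Euclidean BTZ metric.** For every `(x, τ, z)` with `z ∈ (0, 2√2)`, `F` is
differentiable there, its third component (the Poincaré bulk coordinate `η`) is
positive, and for all tangent vectors `u, v` (coordinates ordered `(x, τ, z)`):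
`(R²/F₃²)⟨DF(u), DF(v)⟩ = (R²/z²)[2(1+z²/8)² u₁v₁ + 2(1−z²/8)² u₂v₂ + u₃v₃]`. -/
theorem btzToPoincare_pullback_metric
    (R : ℝ) (hR : 0 < R) (x τ z : ℝ) (hz : z ∈ Set.Ioo (0 : ℝ) (2 * Real.sqrt 2)) :
    DifferentiableAt ℝ btzToPoincare (x, τ, z)
    ∧ 0 < (btzToPoincare (x, τ, z)).2.2
    ∧ ∀ u v : ℝ × ℝ × ℝ,
        R ^ 2 / (btzToPoincare (x, τ, z)).2.2 ^ 2 *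
          dot3 (fderiv ℝ btzToPoincare (x, τ, z) u) (fderiv ℝ btzToPoincare (x, τ, z) v)
        = R ^ 2 / z ^ 2 * (2 * (1 + z ^ 2 / 8) ^ 2 * (u.1 * v.1)
            + 2 * (1 - z ^ 2 / 8) ^ 2 * (u.2.1 * v.2.1) + u.2.2 * v.2.2) := by
  obtain ⟨hz0, _⟩ := hz
  have h8 : (8:ℝ) + z ^ 2 ≠ 0 := by positivity
  have hP1 : HasFDerivAt (fun q : ℝ × ℝ × ℝ => q.1)
      (ContinuousLinearMap.fst ℝ ℝ (ℝ × ℝ)) (x, τ, z) := hasFDerivAt_fst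
  have hP2 : HasFDerivAt (fun q : ℝ × ℝ × ℝ => q.2.1)
      ((ContinuousLinearMap.fst ℝ ℝ ℝ).comp (ContinuousLinearMap.snd ℝ ℝ (ℝ × ℝ))) (x, τ, z) :=
    hasFDerivAt_fst.comp _ hasFDerivAt_snd
  have hP3 : HasFDerivAt (fun q : ℝ × ℝ × ℝ => q.2.2)
      ((ContinuousLinearMap.snd ℝ ℝ ℝ).comp (ContinuousLinearMap.snd ℝ ℝ (ℝ × ℝ))) (x, τ, z) :=
    hasFDerivAt_snd.comp _ hasFDerivAt_snd
  have hexp := hP1.exp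
  have hcos := hP2.cos
  have hsin := hP2.sin
  have hq1 : HasDerivAt (fun t : ℝ => (8 - t ^ 2) / (8 + t ^ 2))
      (-32 * z / (8 + z ^ 2) ^ 2) z := by
    have h1 : HasDerivAt (fun t : ℝ => 8 - t ^ 2) (-(2 * z)) z := by
      simpa using ((hasDerivAt_pow 2 z).const_sub 8)
    have h2 : HasDerivAt (fun t : ℝ => 8 + t ^ 2) (2 * z) z := by
      simpa using ((hasDerivAt_pow 2 z).const_add 8)
    have : HasDerivAt (fun t : ℝ => (8 - t ^ 2) / (8 + t ^ 2)) _ z := h1.div h2 h8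
    convert this using 1
    ring
  have hq2 : HasDerivAt (fun t : ℝ => 4 * Real.sqrt 2 * t / (8 + t ^ 2))
      (4 * Real.sqrt 2 * (8 - z ^ 2) / (8 + z ^ 2) ^ 2) z := by
    have h1 : HasDerivAt (fun t : ℝ => 4 * Real.sqrt 2 * t) (4 * Real.sqrt 2) z := by
      simpa using (hasDerivAt_id z).const_mul (4 * Real.sqrt 2)
    have h2 : HasDerivAt (fun t : ℝ => 8 + t ^ 2) (2 * z) z := by
      simpa using ((hasDerivAt_pow 2 z).const_add 8)
    have : HasDerivAt (fun t : ℝ => 4 * Real.sqrt 2 * t / (8 + t ^ 2)) _ z := h1.div h2 h8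
    convert this using 1
    ring
  have hQ1 := hq1.comp_hasFDerivAt (x, τ, z) hP3
  have hQ2 := hq2.comp_hasFDerivAt (x, τ, z) hP3
  have hf1 := (hexp.mul hQ1).mul hcos
  have hf2 := (hexp.mul hQ1).mul hsin
  have hf3 := hexp.mul hQ2
  have hF : HasFDerivAt btzToPoincare _ (x, τ, z) := (hf1.prodMk (hf2.prodMk hf3))
  refine ⟨hF.differentiableAt, ?_, ?_⟩
  · have : (0:ℝ) < Real.sqrt 2 := by positivity
    simp only [btzToPoincare]
    positivity
  · intro u v
    have hD : ∀ w : ℝ × ℝ × ℝ, fderiv ℝ btzToPoincare (x, τ, z) w =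
        (Real.exp x * ((8 - z ^ 2) / (8 + z ^ 2)) * Real.cos τ * w.1
          - Real.exp x * ((8 - z ^ 2) / (8 + z ^ 2)) * Real.sin τ * w.2.1
          + Real.exp x * (-32 * z / (8 + z ^ 2) ^ 2) * Real.cos τ * w.2.2,
         Real.exp x * ((8 - z ^ 2) / (8 + z ^ 2)) * Real.sin τ * w.1
          + Real.exp x * ((8 - z ^ 2) / (8 + z ^ 2)) * Real.cos τ * w.2.1
          + Real.exp x * (-32 * z / (8 + z ^ 2) ^ 2) * Real.sin τ * w.2.2,
         Real.exp x * (4 * Real.sqrt 2 * z / (8 + z ^ 2)) * w.1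
          + Real.exp x * (4 * Real.sqrt 2 * (8 - z ^ 2) / (8 + z ^ 2) ^ 2) * w.2.2) := by
      intro w
      rw [hF.fderiv]
      simp only [ContinuousLinearMap.prod_apply, ContinuousLinearMap.add_apply,
        ContinuousLinearMap.smul_apply, ContinuousLinearMap.comp_apply,
        ContinuousLinearMap.coe_fst', ContinuousLinearMap.coe_snd', smul_eq_mul]
      refine Prod.ext ?_ (Prod.ext ?_ ?_) <;> simp <;> ring
    rw [hD u, hD v]
    simp only [dot3, btzToPoincare]
    have hs : Real.sqrt 2 ^ 2 = 2 := Real.sq_sqrt (by norm_num)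
    have hzne : z ≠ 0 := hz0.ne'
    have hexpne := Real.exp_ne_zero x
    set E := Real.exp x with hE
    set c := (8 - z ^ 2) / (8 + z ^ 2) with hc
    set c' := -32 * z / (8 + z ^ 2) ^ 2 with hc'
    set g := 4 * Real.sqrt 2 * z / (8 + z ^ 2) with hg
    set g' := 4 * Real.sqrt 2 * (8 - z ^ 2) / (8 + z ^ 2) ^ 2 with hg'
    have key1 : c ^ 2 + g ^ 2 = 1 := by
      rw [hc, hg]; field_simp; linear_combination (16 * z ^ 2) * hs
    have key2 : c * c' + g * g' = 0 := by
      rw [hc, hc', hg, hg']; field_simp; linear_combination (16 * z * (8 - z ^ 2) * (8 + z ^ 2) ^ 3 - 65408 * z - 16400 * z ^ 3 + 256 * z ^ 7 + 16 * z ^ 9) * hs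
    have key3 : c' ^ 2 + g' ^ 2 = 32 / (8 + z ^ 2) ^ 2 := by
      rw [hc', hg']; field_simp; linear_combination (16 * (8 - z ^ 2) ^ 2 * (8 + z ^ 2) ^ 2 - 64512 - 256 * z ^ 2 + 2064 * z ^ 4 - 16 * z ^ 8) * hs
    have hdot :
        (E * c * Real.cos τ * u.1 - E * c * Real.sin τ * u.2.1 + E * c' * Real.cos τ * u.2.2) *
          (E * c * Real.cos τ * v.1 - E * c * Real.sin τ * v.2.1 + E * c' * Real.cos τ * v.2.2)
        + (E * c * Real.sin τ * u.1 + E * c * Real.cos τ * u.2.1 + E * c' * Real.sin τ * u.2.2) *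
          (E * c * Real.sin τ * v.1 + E * c * Real.cos τ * v.2.1 + E * c' * Real.sin τ * v.2.2)
        + (E * g * u.1 + E * g' * u.2.2) * (E * g * v.1 + E * g' * v.2.2)
        = E ^ 2 * ((c ^ 2 + g ^ 2) * (u.1 * v.1) + c ^ 2 * (u.2.1 * v.2.1)
            + (c' ^ 2 + g' ^ 2) * (u.2.2 * v.2.2)
            + (c * c' + g * g') * (u.1 * v.2.2 + u.2.2 * v.1)) := by
      linear_combination (E ^ 2 * (c ^ 2 * (u.1 * v.1 + u.2.1 * v.2.1)
        + c' ^ 2 * (u.2.2 * v.2.2) + c * c' * (u.1 * v.2.2 + u.2.2 * v.1)))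
        * (Real.sin_sq_add_cos_sq τ)
    rw [key1, key2, key3] at hdot
    rw [hdot]
    have hinv : R ^ 2 / (E * g) ^ 2 * E ^ 2 = R ^ 2 * (8 + z ^ 2) ^ 2 / (32 * z ^ 2) := by
      rw [hg]
      field_simp
      linear_combination (-16 * z ^ 2 * R ^ 2 * (8 + z ^ 2) ^ 2 * E ^ 2 - 16 + 1024 * z ^ 2 * R ^ 2 * E ^ 2 + 256 * z ^ 4 * R ^ 2 * E ^ 2 + 16 * z ^ 6 * R ^ 2 * E ^ 2) * hs
    calc R ^ 2 / (E * g) ^ 2 *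
          (E ^ 2 * (1 * (u.1 * v.1) + c ^ 2 * (u.2.1 * v.2.1)
            + 32 / (8 + z ^ 2) ^ 2 * (u.2.2 * v.2.2) + 0 * (u.1 * v.2.2 + u.2.2 * v.1)))
        = (R ^ 2 / (E * g) ^ 2 * E ^ 2) * (1 * (u.1 * v.1) + c ^ 2 * (u.2.1 * v.2.1)
            + 32 / (8 + z ^ 2) ^ 2 * (u.2.2 * v.2.2) + 0 * (u.1 * v.2.2 + u.2.2 * v.1)) := by
          ring
      _ = _ := by
          rw [hinv, hc]
          field_simp
          ring
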